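/- arXiv:1907.05773 — 3 statements merged into one kernel-verified Lean document; each statement's English description precedes it below -/
import Mathlib

section
/- If m ≤ n, then M^m = (E^{m,n})^T M^n E^{m,n}, where M^k is the degree-k Bernstein mass matrix and E^{m,n} the degree elevation matrix. -/
/-- The Bernstein polynomial `B^n_i` as a real function. -/
noncomputable def bern (n i : ℕ) (x : ℝ) : ℝ :=
  (n.choose i : ℝ) * x ^ i * (1 - x) ^ (n - i)

/-- The Bernstein mass matrix `M^n`. -/
noncomputable def bmass (n : ℕ) : Matrix (Fin (n + 1)) (Fin (n + 1)) ℝ :=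
  fun i j => ∫ x in (0:ℝ)..1, bern n i x * bern n j x

/-- The degree elevation matrix `E^{m,n}` (out-of-range binomials are zero). -/
noncomputable def elev (m n : ℕ) : Matrix (Fin (n + 1)) (Fin (m + 1)) ℝ :=
  fun i j =>
    if (j : ℕ) ≤ (i : ℕ) then
      (m.choose j : ℝ) * ((n - m).choose ((i : ℕ) - (j : ℕ)) : ℝ) / (n.choose i : ℝ)
    else 0

lemma bern_continuous (n i : ℕ) : Continuous (bern n i) := by
  unfold bern; continuity

lemma elev_mul_bern (m n : ℕ) (hmn : m ≤ n) (j : Fin (m + 1)) (x : ℝ) :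
    ∑ i : Fin (n + 1), elev m n i j * bern n i x = bern m j x := by
  have hj : (j : ℕ) ≤ m := Nat.lt_succ_iff.mp j.isLt
  have h1 : ∑ i : Fin (n + 1), elev m n i j * bern n i x
      = ∑ i ∈ Finset.range (n + 1),
          (if (j : ℕ) ≤ i then
              (m.choose j : ℝ) * ((n - m).choose (i - j) : ℝ) / (n.choose i : ℝ)
            else 0) * bern n i x := by
    rw [← Fin.sum_univ_eq_sum_range]
    exact Finset.sum_congr rfl fun i _ => rfl
  rw [h1]
  have h2 : ∀ i ∈ Finset.range (n + 1),
      (if (j : ℕ) ≤ i then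
          (m.choose j : ℝ) * ((n - m).choose (i - j) : ℝ) / (n.choose i : ℝ)
        else 0) * bern n i x
      = if (j : ℕ) ≤ i then
          (m.choose j : ℝ) * ((n - m).choose (i - j) : ℝ) * x ^ i * (1 - x) ^ (n - i)
        else 0 := by
    intro i hi
    have hin : i ≤ n := Nat.lt_succ_iff.mp (Finset.mem_range.mp hi)
    have hc : (n.choose i : ℝ) ≠ 0 := by
      exact_mod_cast Nat.choose_pos hin |>.ne'
    by_cases h : (j : ℕ) ≤ i
    · simp only [h, if_true, bern]
      field_simp
    · simp [h]
  rw [Finset.sum_congr rfl h2]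
  rw [Finset.range_eq_Ico, ← Finset.sum_Ico_consecutive _ (Nat.zero_le (j : ℕ))
      (by omega : (j : ℕ) ≤ n + 1)]
  have hlow : ∑ i ∈ Finset.Ico 0 (j : ℕ),
      (if (j : ℕ) ≤ i then
          (m.choose j : ℝ) * ((n - m).choose (i - j) : ℝ) * x ^ i * (1 - x) ^ (n - i)
        else 0) = 0 := by
    apply Finset.sum_eq_zero
    intro i hi
    have : i < (j : ℕ) := (Finset.mem_Ico.mp hi).2
    simp [Nat.not_le.mpr this]
  rw [hlow, zero_add, Finset.sum_Ico_eq_sum_range]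
  have h3 : ∀ k ∈ Finset.range (n + 1 - j),
      (if (j : ℕ) ≤ (j : ℕ) + k then
          (m.choose j : ℝ) * ((n - m).choose ((j : ℕ) + k - j) : ℝ) * x ^ ((j : ℕ) + k)
            * (1 - x) ^ (n - ((j : ℕ) + k))
        else 0)
      = (m.choose j : ℝ) * ((n - m).choose k : ℝ) * x ^ ((j : ℕ) + k)
          * (1 - x) ^ (n - (j : ℕ) - k) := by
    intro k _
    rw [if_pos (Nat.le_add_right _ _)]
    have e1 : (j : ℕ) + k - (j : ℕ) = k := by omega
    have e2 : n - ((j : ℕ) + k) = n - (j : ℕ) - k := by omega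
    rw [e1, e2]
  rw [Finset.sum_congr rfl h3]
  have hsub : (Finset.range (n - m + 1)) ⊆ Finset.range (n + 1 - (j : ℕ)) :=
    Finset.range_subset_range.2 (by omega)
  have h4 : ∑ k ∈ Finset.range (n + 1 - (j : ℕ)),
        (m.choose j : ℝ) * ((n - m).choose k : ℝ) * x ^ ((j : ℕ) + k)
          * (1 - x) ^ (n - (j : ℕ) - k)
      = ∑ k ∈ Finset.range (n - m + 1),
        (m.choose j : ℝ) * ((n - m).choose k : ℝ) * x ^ ((j : ℕ) + k)
          * (1 - x) ^ (n - (j : ℕ) - k) := by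
    refine (Finset.sum_subset hsub ?_).symm
    intro k hk hk'
    have : n - m < k := by
      simp only [Finset.mem_range] at hk hk'
      omega
    rw [Nat.choose_eq_zero_of_lt this]
    norm_num
  rw [h4]
  have hone : (1 : ℝ) = (x + (1 - x)) ^ (n - m) := by norm_num
  symm
  rw [bern]
  calc (m.choose (j : ℕ) : ℝ) * x ^ (j : ℕ) * (1 - x) ^ (m - (j : ℕ))
      = (m.choose j : ℝ) * x ^ (j : ℕ) * (1 - x) ^ (m - (j : ℕ)) * (x + (1 - x)) ^ (n - m) := by
        rw [← hone]; ring
    _ = ∑ k ∈ Finset.range (n - m + 1),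
          (m.choose j : ℝ) * ((n - m).choose k : ℝ) * x ^ ((j : ℕ) + k)
            * (1 - x) ^ (n - (j : ℕ) - k) := by
        rw [add_pow, Finset.mul_sum]
        apply Finset.sum_congr rfl
        intro k hk
        have hk' : k ≤ n - m := Nat.lt_succ_iff.mp (Finset.mem_range.mp hk)
        have he2 : n - (j : ℕ) - k = (m - (j : ℕ)) + ((n - m) - k) := by omega
        rw [pow_add, he2, pow_add]
        ring

/-- `M^m = (E^{m,n})ᵀ M^n E^{m,n}` for `m ≤ n`. -/
theorem bernstein_mass_elevation (m n : ℕ) (hmn : m ≤ n) :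
    bmass m = (elev m n).transpose * bmass n * elev m n := by
  funext j k
  have key : ∀ x : ℝ, bern m j x * bern m k x
      = ∑ i' : Fin (n + 1), ∑ i : Fin (n + 1),
          elev m n i j * elev m n i' k * (bern n i x * bern n i' x) := by
    intro x
    rw [← elev_mul_bern m n hmn j x, ← elev_mul_bern m n hmn k x, Finset.sum_mul_sum,
        Finset.sum_comm]
    exact Finset.sum_congr rfl fun i' _ => Finset.sum_congr rfl fun i _ => by ring
  have h1 : bmass m j k = ∫ x in (0:ℝ)..1, ∑ i' : Fin (n + 1), ∑ i : Fin (n + 1),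
      elev m n i j * elev m n i' k * (bern n i x * bern n i' x) := by
    simp only [bmass]
    exact intervalIntegral.integral_congr fun x _ => key x
  have hA : (∫ x in (0:ℝ)..1, ∑ i' : Fin (n + 1), ∑ i : Fin (n + 1),
        elev m n i j * elev m n i' k * (bern n i x * bern n i' x))
      = ∑ i' : Fin (n + 1), ∫ x in (0:ℝ)..1, ∑ i : Fin (n + 1),
        elev m n i j * elev m n i' k * (bern n i x * bern n i' x) := by
    apply intervalIntegral.integral_finset_sum
    intro i' _
    apply Continuous.intervalIntegrable
    apply continuous_finset_sum
    intro i _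
    exact continuous_const.mul ((bern_continuous n i).mul (bern_continuous n i'))
  have hB : ∀ i' : Fin (n + 1),
      (∫ x in (0:ℝ)..1, ∑ i : Fin (n + 1),
        elev m n i j * elev m n i' k * (bern n i x * bern n i' x))
      = ∑ i : Fin (n + 1), elev m n i j * elev m n i' k
          * ∫ x in (0:ℝ)..1, bern n i x * bern n i' x := by
    intro i'
    have step : (∫ x in (0:ℝ)..1, ∑ i : Fin (n + 1),
          elev m n i j * elev m n i' k * (bern n i x * bern n i' x))
        = ∑ i : Fin (n + 1), ∫ x in (0:ℝ)..1,
          elev m n i j * elev m n i' k * (bern n i x * bern n i' x) := by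
      apply intervalIntegral.integral_finset_sum
      intro i _
      exact (continuous_const.mul ((bern_continuous n i).mul
        (bern_continuous n i'))).intervalIntegrable 0 1
    rw [step]
    exact Finset.sum_congr rfl fun i _ => intervalIntegral.integral_const_mul _ _
  rw [h1, hA]
  simp only [Matrix.mul_apply, Matrix.transpose_apply]
  apply Finset.sum_congr rfl
  intro i' _
  rw [hB i', Finset.sum_mul]
  apply Finset.sum_congr rfl
  intro i _
  simp only [bmass]
  ring
end

section
/- The transposed elevation matrix (E^{n-1,n})^T has a one-dimensional null space spanned by the vector ((-1)^{n+i} C(n,i))_{i=0}^n, i.e., the Bernstein coefficient vector of the shifted Legendre polynomial L^n. -/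
/-- The degree elevation matrix `E^{n-1,n}` (here from degree `n` to degree `n+1`,
out-of-range binomials are zero). -/
noncomputable def elev1 (n : ℕ) : Matrix (Fin (n + 2)) (Fin (n + 1)) ℝ :=
  fun i j =>
    if (j : ℕ) ≤ (i : ℕ) then
      (n.choose j : ℝ) * ((Nat.choose 1 ((i : ℕ) - (j : ℕ))) : ℝ) / ((n + 1).choose i : ℝ)
    else 0

lemma elev1_zero (n : ℕ) (i : Fin (n+2)) (j : Fin (n+1))
    (h1 : (i : ℕ) ≠ j) (h2 : (i : ℕ) ≠ j + 1) : elev1 n i j = 0 := by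
  unfold elev1
  split
  · rename_i h
    have : 1 < (i : ℕ) - j := by omega
    rw [Nat.choose_eq_zero_of_lt this]
    simp
  · rfl

lemma key (n : ℕ) (x : Fin (n+2) → ℝ) (j : Fin (n+1)) :
    ((elev1 n).transpose.mulVec x) j =
      (n.choose j : ℝ) / ((n+1).choose j : ℝ) * x j.castSucc
      + (n.choose j : ℝ) / ((n+1).choose (j+1) : ℝ) * x j.succ := by
  have hne : (j.castSucc : Fin (n+2)) ≠ j.succ := by
    apply Fin.ne_of_val_ne; simp
  have hsub : ({j.castSucc, j.succ} : Finset (Fin (n+2))) ⊆ Finset.univ :=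
    Finset.subset_univ _
  have := Finset.sum_subset hsub (f := fun i => (elev1 n).transpose j i * x i) ?_
  · rw [Matrix.mulVec, dotProduct, ← this, Finset.sum_pair hne]
    unfold elev1 Matrix.transpose
    simp [Nat.choose]
  · intro i _ hi
    simp only [Finset.mem_insert, Finset.mem_singleton] at hi
    push_neg at hi
    have h1 : (i : ℕ) ≠ j := fun h => hi.1 (Fin.ext (by simp [h]))
    have h2 : (i : ℕ) ≠ j + 1 := fun h => hi.2 (Fin.ext (by simp [h]))
    show (elev1 n).transpose j i * x i = 0
    rw [Matrix.transpose_apply, elev1_zero n i j h1 h2, zero_mul]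

/-- the null space of `(E^{n-1,n})ᵀ` is one-dimensional, spanned by the
Bernstein coefficient vector `((-1)^{n+i} C(n,i))ᵢ` of the shifted Legendre
polynomial `L^n`.  (Stated with `n` replaced by `n+1` to keep `n ≥ 1`.) -/
theorem elevation_transpose_ker (n : ℕ) :
    LinearMap.ker (Matrix.mulVecLin (elev1 n).transpose) =
      Submodule.span ℝ
        {fun i : Fin (n + 2) => (-1 : ℝ) ^ (n + 1 + (i : ℕ)) * ((n + 1).choose i : ℝ)} := by
  set v : Fin (n+2) → ℝ := fun i => (-1 : ℝ) ^ (n + 1 + (i : ℕ)) * ((n + 1).choose i : ℝ) with hv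
  have hC1 : ∀ j : Fin (n+1), ((n+1).choose (j:ℕ) : ℝ) ≠ 0 := by
    intro j
    have := Nat.choose_pos (show (j:ℕ) ≤ n+1 by omega)
    positivity
  have hC2 : ∀ j : Fin (n+1), ((n+1).choose ((j:ℕ)+1) : ℝ) ≠ 0 := by
    intro j
    have := Nat.choose_pos (show (j:ℕ)+1 ≤ n+1 by omega)
    positivity
  have hCn : ∀ j : Fin (n+1), (n.choose (j:ℕ) : ℝ) ≠ 0 := by
    intro j
    have := Nat.choose_pos (show (j:ℕ) ≤ n by omega)
    positivity
  apply le_antisymm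
  · -- ker ≤ span
    intro x hx
    rw [LinearMap.mem_ker] at hx
    have hrec : ∀ j : Fin (n+1),
        x j.succ = -(((n+1).choose ((j:ℕ)+1) : ℝ) / ((n+1).choose (j:ℕ) : ℝ)) * x j.castSucc := by
      intro j
      have h0 : ((elev1 n).transpose.mulVec x) j = 0 := by
        rw [show (elev1 n).transpose.mulVec x = 0 from hx]; rfl
      rw [key] at h0
      have h2 : (n.choose (j:ℕ) : ℝ) *
          (x j.castSucc / ((n+1).choose (j:ℕ) : ℝ) + x j.succ / ((n+1).choose ((j:ℕ)+1) : ℝ)) = 0 := by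
        linear_combination h0
      have h1 := (mul_eq_zero.mp h2).resolve_left (hCn j)
      have e1 : x j.succ = (x j.succ / ((n+1).choose ((j:ℕ)+1) : ℝ)) * ((n+1).choose ((j:ℕ)+1) : ℝ) :=
        (div_mul_cancel₀ _ (hC2 j)).symm
      have e2 : x j.succ / ((n+1).choose ((j:ℕ)+1) : ℝ) = -(x j.castSucc / ((n+1).choose (j:ℕ) : ℝ)) := by
        linarith
      rw [e1, e2]; ring
    have hxi : ∀ i : ℕ, ∀ hi : i < n + 2,
        x ⟨i, hi⟩ = (-1:ℝ)^i * ((n+1).choose i : ℝ) * x 0 := by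
      intro i
      induction i with
      | zero => intro hi; simp
      | succ i ih =>
        intro hi
        have hi' : i < n + 1 := by omega
        set j : Fin (n+1) := ⟨i, hi'⟩
        have h1 : (⟨i+1, hi⟩ : Fin (n+2)) = j.succ := rfl
        have h2 : (⟨i, by omega⟩ : Fin (n+2)) = j.castSucc := rfl
        rw [h1, hrec j, ← h2, ih (by omega)]
        have hne : ((n+1).choose i : ℝ) ≠ 0 := hC1 j
        simp only [show (j:ℕ) = i from rfl]
        field_simp
        ring
    rw [Submodule.mem_span_singleton]
    refine ⟨(-1:ℝ)^(n+1) * x 0, ?_⟩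
    funext i
    have hx' := hxi i i.isLt
    rw [show (⟨(i:ℕ), i.isLt⟩ : Fin (n+2)) = i from rfl] at hx'
    simp only [Pi.smul_apply, smul_eq_mul, hv]
    rw [hx', show n+1+(i:ℕ) = (n+1)+(i:ℕ) from rfl, pow_add]
    have hsq : ((-1:ℝ))^(n+1) * ((-1:ℝ))^(n+1) = 1 := by
      rw [← pow_add]; exact Even.neg_one_pow ⟨n+1, by ring⟩
    linear_combination ((-1:ℝ)^(i:ℕ) * (((n+1).choose (i:ℕ)) : ℝ) * x 0) * hsq
  · -- span ≤ ker
    rw [Submodule.span_le, Set.singleton_subset_iff]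
    rw [SetLike.mem_coe, LinearMap.mem_ker]
    funext j
    rw [Matrix.mulVecLin_apply, key]
    simp only [hv, Fin.coe_castSucc, Fin.val_succ, Pi.zero_apply]
    have cancel : ∀ a b c : ℝ, c ≠ 0 → a / c * (b * c) = a * b := by
      intro a b c hc; field_simp
    rw [show n+1+((j:ℕ)+1) = (n+1+(j:ℕ))+1 by ring, pow_succ,
      cancel _ _ _ (hC1 j), cancel _ _ _ (hC2 j)]
    ring
end

section
/- The inverse of the scaled Hankel Bernstein mass matrix factors as (M̃^n)^{-1} = T̃^n H^n − T^n H̃^n, where T^n_{ij} = (-1)^{i-j} C(n+1,i-j)^2, T̃^n_{ij} = (i-j) T^n_{ij}, H^n_{ij} = (-1)^{i+j+1} C(n+1,i+j+1)^2, H̃^n_{ij} = (i+j+1) H^n_{ij}. -/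
/-- The scaled (Hankel) Bernstein mass matrix `M̃^n`. -/
noncomputable def bmassH (n : ℕ) : Matrix (Fin (n + 1)) (Fin (n + 1)) ℝ :=
  fun i j =>
    (Nat.factorial (2 * n - (i : ℕ) - (j : ℕ)) : ℝ) *
      (Nat.factorial ((i : ℕ) + (j : ℕ)) : ℝ) / (Nat.factorial (2 * n + 1) : ℝ)

/-- `C(n,k)` as a real number, zero for negative `k ∈ ℤ`. -/
noncomputable def chooseZ (n : ℕ) (k : ℤ) : ℝ :=
  if 0 ≤ k then ((n.choose k.toNat : ℕ) : ℝ) else 0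

/-- Toeplitz matrix `T^n_{ij} = (-1)^{i-j} C(n+1,i-j)²` (out-of-range binomials zero). -/
noncomputable def Tmat (n : ℕ) : Matrix (Fin (n + 1)) (Fin (n + 1)) ℝ :=
  fun i j => (-1 : ℝ) ^ ((i : ℤ) - (j : ℤ)) * chooseZ (n + 1) ((i : ℤ) - (j : ℤ)) ^ 2

/-- `T̃^n_{ij} = (i-j) T^n_{ij}`. -/
noncomputable def Ttil (n : ℕ) : Matrix (Fin (n + 1)) (Fin (n + 1)) ℝ :=
  fun i j => (((i : ℕ) : ℝ) - ((j : ℕ) : ℝ)) * Tmat n i j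

/-- Hankel matrix `H^n_{ij} = (-1)^{i+j+1} C(n+1,i+j+1)²`. -/
noncomputable def Hmat (n : ℕ) : Matrix (Fin (n + 1)) (Fin (n + 1)) ℝ :=
  fun i j => (-1 : ℝ) ^ ((i : ℕ) + (j : ℕ) + 1) * (((n + 1).choose ((i : ℕ) + (j : ℕ) + 1) : ℕ) : ℝ) ^ 2

/-- `H̃^n_{ij} = (i+j+1) H^n_{ij}`. -/
noncomputable def Htil (n : ℕ) : Matrix (Fin (n + 1)) (Fin (n + 1)) ℝ :=
  fun i j => (((i : ℕ) : ℝ) + ((j : ℕ) : ℝ) + 1) * Hmat n i j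


open Finset Polynomial

set_option linter.constructorNameAsVariable false
set_option linter.unusedTactic false

/-- The `N`-th finite difference of `s ^ j` vanishes for `j < N`. -/
lemma BHI.alt_pow (N : ℕ) : ∀ j : ℕ, j < N →
    ∑ s ∈ range (N + 1), (-1 : ℝ) ^ s * (N.choose s : ℝ) * (s : ℝ) ^ j = 0 := by
  induction N with
  | zero => intro j hj; omega
  | succ N ih =>
    intro j hj
    set f : ℕ → ℝ := fun s => (-1 : ℝ) ^ s * ((N+1).choose s : ℝ) * (s : ℝ) ^ j with hf
    set g : ℕ → ℝ := fun s => (-1 : ℝ) ^ s * (N.choose s : ℝ) * (s : ℝ) ^ j with hg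
    have e1 := Finset.sum_range_succ' f (N + 1)
    have e2 : ∀ s, f (s+1) = -((-1 : ℝ) ^ s * (N.choose s : ℝ) * ((s:ℝ)+1) ^ j) + g (s+1) := by
      intro s
      simp only [hf, hg, Nat.choose_succ_succ]
      push_cast
      ring
    have e3 : ∑ s ∈ range (N+1), f (s+1)
        = -(∑ s ∈ range (N+1), (-1 : ℝ) ^ s * (N.choose s : ℝ) * ((s:ℝ)+1) ^ j)
          + ∑ s ∈ range (N+1), g (s+1) := by
      rw [Finset.sum_congr rfl (fun s _ => e2 s), Finset.sum_add_distrib, Finset.sum_neg_distrib]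
    have e4 := Finset.sum_range_succ' g (N + 1)
    have e5 : ∑ s ∈ range (N+2), g s = ∑ s ∈ range (N+1), g s := by
      rw [Finset.sum_range_succ]
      simp [hg, Nat.choose_eq_zero_of_lt (Nat.lt_succ_self N)]
    have key : ∑ s ∈ range (N + 2), f s
        = ∑ s ∈ range (N + 1), (-1 : ℝ) ^ s * (N.choose s : ℝ)
            * ((s : ℝ) ^ j - ((s : ℝ) + 1) ^ j) := by
      have hf0 : f 0 = g 0 := by simp [hf, hg]
      have expand : ∑ s ∈ range (N + 1), (-1 : ℝ) ^ s * (N.choose s : ℝ)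
            * ((s : ℝ) ^ j - ((s : ℝ) + 1) ^ j)
          = ∑ s ∈ range (N+1), g s
            - ∑ s ∈ range (N+1), (-1 : ℝ) ^ s * (N.choose s : ℝ) * ((s:ℝ)+1) ^ j := by
        rw [← Finset.sum_sub_distrib]
        exact Finset.sum_congr rfl (fun s _ => by simp [hg]; ring)
      rw [expand]
      rw [e1, e3, hf0]
      have : ∑ s ∈ range (N+1), g (s+1) = ∑ s ∈ range (N+1), g s - g 0 := by
        have := e4
        rw [e5] at this
        linarith
      rw [this]
      ring
    rw [key]
    have expand2 : ∀ s : ℕ, (s : ℝ) ^ j - ((s : ℝ) + 1) ^ j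
        = -∑ t ∈ range j, (s : ℝ) ^ t * (j.choose t : ℝ) := by
      intro s
      rw [add_pow (s : ℝ) 1 j, Finset.sum_range_succ]
      rw [Finset.sum_congr rfl (fun t _ => by rw [one_pow, mul_one] :
        ∀ t ∈ range j, (s : ℝ) ^ t * 1 ^ (j - t) * (j.choose t : ℝ) = (s:ℝ)^t * (j.choose t : ℝ))]
      simp [Nat.choose_self]
    have step2 : ∑ s ∈ range (N + 1), (-1 : ℝ) ^ s * (N.choose s : ℝ)
          * ((s : ℝ) ^ j - ((s : ℝ) + 1) ^ j)
        = -∑ t ∈ range j, (j.choose t : ℝ) *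
            ∑ s ∈ range (N + 1), (-1 : ℝ) ^ s * (N.choose s : ℝ) * (s : ℝ) ^ t := by
      calc ∑ s ∈ range (N + 1), (-1 : ℝ) ^ s * (N.choose s : ℝ)
              * ((s : ℝ) ^ j - ((s : ℝ) + 1) ^ j)
          = ∑ s ∈ range (N + 1), ∑ t ∈ range j,
              -((j.choose t : ℝ) * ((-1 : ℝ) ^ s * (N.choose s : ℝ) * (s : ℝ) ^ t)) := by
            refine Finset.sum_congr rfl (fun s _ => ?_)
            rw [expand2 s, mul_neg, Finset.mul_sum, ← Finset.sum_neg_distrib]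
            exact Finset.sum_congr rfl (fun t _ => by ring)
        _ = ∑ t ∈ range j, ∑ s ∈ range (N + 1),
              -((j.choose t : ℝ) * ((-1 : ℝ) ^ s * (N.choose s : ℝ) * (s : ℝ) ^ t)) :=
            Finset.sum_comm
        _ = -∑ t ∈ range j, (j.choose t : ℝ) *
              ∑ s ∈ range (N + 1), (-1 : ℝ) ^ s * (N.choose s : ℝ) * (s : ℝ) ^ t := by
            rw [← Finset.sum_neg_distrib]
            exact Finset.sum_congr rfl
              (fun t _ => by rw [Finset.sum_neg_distrib, ← Finset.mul_sum])
    rw [step2]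
    rw [Finset.sum_congr rfl (fun t ht => by
      rw [ih t (by have := Finset.mem_range.mp ht; omega)] :
      ∀ t ∈ range j, (j.choose t : ℝ) *
        ∑ s ∈ range (N + 1), (-1 : ℝ) ^ s * (N.choose s : ℝ) * (s : ℝ) ^ t
        = (j.choose t : ℝ) * 0)]
    simp

/-- The `N`-th finite difference kills polynomials of degree `< N`. -/
lemma BHI.alt_poly (N : ℕ) (g : ℝ[X]) (h : g.natDegree < N) :
    ∑ s ∈ range (N + 1), (-1 : ℝ) ^ s * (N.choose s : ℝ) * g.eval (s : ℝ) = 0 := by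
  have e : ∀ s : ℕ, g.eval (s : ℝ)
      = ∑ t ∈ range (g.natDegree + 1), g.coeff t * (s : ℝ) ^ t := by
    intro s; exact Polynomial.eval_eq_sum_range (s : ℝ)
  calc ∑ s ∈ range (N + 1), (-1 : ℝ) ^ s * (N.choose s : ℝ) * g.eval (s : ℝ)
      = ∑ s ∈ range (N + 1), ∑ t ∈ range (g.natDegree + 1),
          g.coeff t * ((-1 : ℝ) ^ s * (N.choose s : ℝ) * (s : ℝ) ^ t) := by
        refine Finset.sum_congr rfl (fun s _ => ?_)
        rw [e s, Finset.mul_sum]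
        exact Finset.sum_congr rfl (fun t _ => by ring)
    _ = ∑ t ∈ range (g.natDegree + 1), g.coeff t *
          ∑ s ∈ range (N + 1), (-1 : ℝ) ^ s * (N.choose s : ℝ) * (s : ℝ) ^ t := by
        rw [Finset.sum_comm]
        exact Finset.sum_congr rfl (fun t _ => by rw [Finset.mul_sum])
    _ = 0 := by
        rw [Finset.sum_congr rfl (fun t ht => by
          rw [BHI.alt_pow N t (by have := Finset.mem_range.mp ht; omega)] :
          ∀ t ∈ range (g.natDegree + 1), g.coeff t *
            ∑ s ∈ range (N + 1), (-1 : ℝ) ^ s * (N.choose s : ℝ) * (s : ℝ) ^ t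
            = g.coeff t * 0)]
        simp

/-- cast factorial product identity -/
lemma BHI.fact_prod (s p : ℕ) :
    (((s + p).factorial : ℕ) : ℝ)
      = (s.factorial : ℝ) * ∏ t ∈ range p, ((s : ℝ) + 1 + t) := by
  induction p with
  | zero => simp
  | succ p ih =>
    rw [Finset.prod_range_succ, ← mul_assoc, ← ih]
    have : s + (p + 1) = (s + p) + 1 := by omega
    rw [this, Nat.factorial_succ]
    push_cast
    ring

/-- Master identity: Legendre-type orthogonality, discrete form. -/
lemma BHI.master (N p q : ℕ) (h : p + q < N) :
    ∑ s ∈ range (N + 1), (-1 : ℝ) ^ s * ((N.choose s : ℕ) : ℝ) ^ 2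
      * ((s + p).factorial : ℝ) * (((N - s) + q).factorial : ℝ) = 0 := by
  set g : ℝ[X] := (∏ t ∈ range p, (X + C ((t : ℝ) + 1)))
      * (∏ t ∈ range q, (C ((N : ℝ) + 1 + t) - X)) with hg
  have hdeg : g.natDegree < N := by
    have h1 : (∏ t ∈ range p, (X + C ((t : ℝ) + 1))).natDegree ≤ p := by
      refine le_trans (Polynomial.natDegree_prod_le _ _) (le_of_eq ?_)
      have e : ∑ i ∈ range p, (X + C ((i:ℝ) + 1)).natDegree = ∑ _i ∈ range p, 1 :=
        Finset.sum_congr rfl (fun t _ => Polynomial.natDegree_X_add_C _)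
      rw [e]; simp
    have h2 : (∏ t ∈ range q, (C ((N : ℝ) + 1 + t) - X)).natDegree ≤ q := by
      refine le_trans (Polynomial.natDegree_prod_le _ _) (le_of_eq ?_)
      have e : ∑ i ∈ range q, (C ((N : ℝ) + 1 + i) - X).natDegree = ∑ _i ∈ range q, 1 :=
        Finset.sum_congr rfl (fun t _ => by
          rw [show C ((N : ℝ) + 1 + t) - X = -(X - C ((N : ℝ) + 1 + t)) by ring,
            Polynomial.natDegree_neg, Polynomial.natDegree_X_sub_C])
      rw [e]; simp
    calc g.natDegree ≤ _ + _ := Polynomial.natDegree_mul_le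
      _ < N := by omega
  have heval : ∀ s : ℕ, s ≤ N → g.eval (s : ℝ)
      = (∏ t ∈ range p, ((s : ℝ) + 1 + t)) * ∏ t ∈ range q, (((N - s : ℕ) : ℝ) + 1 + t) := by
    intro s hs
    rw [hg]
    simp only [Polynomial.eval_mul, Polynomial.eval_prod, Polynomial.eval_add,
      Polynomial.eval_sub, Polynomial.eval_X, Polynomial.eval_C]
    congr 1
    · exact Finset.prod_congr rfl (fun t _ => by ring)
    · refine Finset.prod_congr rfl (fun t _ => ?_)
      rw [Nat.cast_sub hs]
      ring
  have hterm : ∀ s ∈ range (N + 1),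
      (-1 : ℝ) ^ s * ((N.choose s : ℕ) : ℝ) ^ 2
        * ((s + p).factorial : ℝ) * (((N - s) + q).factorial : ℝ)
      = (N.factorial : ℝ) * ((-1 : ℝ) ^ s * (N.choose s : ℝ) * g.eval (s : ℝ)) := by
    intro s hs
    have hsN : s ≤ N := by have := Finset.mem_range.mp hs; omega
    have hfac : ((N.choose s : ℕ) : ℝ) * (s.factorial : ℝ) * (((N - s).factorial : ℕ) : ℝ)
        = (N.factorial : ℝ) := by
      rw [← Nat.cast_mul, ← Nat.cast_mul, Nat.choose_mul_factorial_mul_factorial hsN]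
    rw [heval s hsN, BHI.fact_prod s p, BHI.fact_prod (N - s) q]
    rw [sq]
    linear_combination ((-1:ℝ)^s * ((N.choose s : ℕ):ℝ) *
      ((∏ t ∈ range p, ((s:ℝ)+1+t)) * ∏ t ∈ range q, (((N - s : ℕ):ℝ)+1+t))) * hfac
  rw [Finset.sum_congr rfl hterm, ← Finset.mul_sum, BHI.alt_poly N g hdeg, mul_zero]

noncomputable def BHI.aa (n j : ℕ) : ℝ := (((n + 1).choose j : ℕ) : ℝ) ^ 2
noncomputable def BHI.muf (n m : ℕ) : ℝ := ((2 * n - m).factorial : ℝ) * (m.factorial : ℝ)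
noncomputable def BHI.Wf (n i m : ℕ) : ℝ :=
  ∑ r ∈ range (i + 1), (2 * (r : ℝ) - (m : ℝ)) * BHI.aa n r * BHI.aa n (m - r)
noncomputable def BHI.Rf (n i k : ℕ) : ℝ := (-1 : ℝ) ^ (i + k + 1) * BHI.Wf n i (i + k + 1)
noncomputable def BHI.Pf (n i l : ℕ) : ℝ :=
  ∑ k ∈ range (n + 1), BHI.Rf n i k * BHI.muf n (k + l)

namespace BHI


lemma aa_zero (n : ℕ) : aa n 0 = 1 := by simp [aa]
lemma aa_top (n : ℕ) : aa n (n + 1) = 1 := by simp [aa]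
lemma aa_big (n j : ℕ) (h : n + 1 < j) : aa n j = 0 := by
  simp [aa, Nat.choose_eq_zero_of_lt h]

/-- Full antisymmetric sum vanishes. -/
lemma Wf_full (n m : ℕ) : Wf n m m = 0 := by
  have refl := Finset.sum_range_reflect
    (fun r => (2 * (r : ℝ) - (m : ℝ)) * aa n r * aa n (m - r)) (m + 1)
  have e : ∀ r ∈ range (m + 1),
      (2 * ((m + 1 - 1 - r : ℕ) : ℝ) - (m : ℝ)) * aa n (m + 1 - 1 - r) * aa n (m - (m + 1 - 1 - r))
      = -((2 * (r : ℝ) - (m : ℝ)) * aa n r * aa n (m - r)) := by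
    intro r hr
    have hrm : r ≤ m := by have := Finset.mem_range.mp hr; omega
    have h1 : m + 1 - 1 - r = m - r := by omega
    have h2 : m - (m - r) = r := by omega
    rw [h1, h2, Nat.cast_sub hrm]
    ring
  rw [Finset.sum_congr rfl e, Finset.sum_neg_distrib] at refl
  have : Wf n m m = ∑ r ∈ range (m + 1),
      (2 * (r : ℝ) - (m : ℝ)) * aa n r * aa n (m - r) := rfl
  rw [this]
  linarith [refl]

/-- Displacement structure. -/
lemma Rf_disp (n i k : ℕ) :
    Rf n (i + 1) k = Rf n i (k + 1)
      + (-1 : ℝ) ^ (i + k) * ((i : ℝ) - (k : ℝ)) * aa n (i + 1) * aa n (k + 1) := by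
  have hW : Wf n (i + 1) (i + k + 2)
      = Wf n i (i + k + 2)
        + (2 * ((i + 1 : ℕ) : ℝ) - ((i + k + 2 : ℕ) : ℝ)) * aa n (i + 1) * aa n (k + 1) := by
    rw [Wf, Wf, Finset.sum_range_succ, show (i + k + 2) - (i + 1) = k + 1 from by omega]
  have e1 : Rf n (i + 1) k = (-1 : ℝ) ^ (i + k + 2) * Wf n (i + 1) (i + k + 2) := by
    have : (i + 1) + k + 1 = i + k + 2 := by omega
    rw [Rf, this]
  have e2 : Rf n i (k + 1) = (-1 : ℝ) ^ (i + k + 2) * Wf n i (i + k + 2) := by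
    have : i + (k + 1) + 1 = i + k + 2 := by omega
    rw [Rf, this]
  rw [e1, e2, hW]
  have hsgn : (-1 : ℝ) ^ (i + k + 2) = (-1 : ℝ) ^ (i + k) := by
    rw [pow_add]; norm_num
  rw [hsgn]
  push_cast
  ring

lemma Rf_left (n i : ℕ) : Rf n i 0 = (-1 : ℝ) ^ i * ((i : ℝ) + 1) * aa n (i + 1) := by
  have hW : Wf n (i + 1) (i + 1)
      = Wf n i (i + 1) + (2 * ((i + 1 : ℕ) : ℝ) - ((i + 1 : ℕ) : ℝ)) * aa n (i + 1) * aa n 0 := by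
    rw [Wf, Wf, Finset.sum_range_succ, show (i + 1) - (i + 1) = 0 from by omega]
  rw [Wf_full] at hW
  have hWi : Wf n i (i + 1) = -(((i : ℝ) + 1) * aa n (i + 1)) := by
    rw [aa_zero] at hW
    push_cast at hW
    linarith
  have : Rf n i 0 = (-1 : ℝ) ^ (i + 0 + 1) * Wf n i (i + 0 + 1) := rfl
  rw [this]
  have h0 : i + 0 + 1 = i + 1 := by omega
  rw [h0, hWi, pow_succ]
  ring

lemma Rf_row0 (n k : ℕ) : Rf n 0 k = (-1 : ℝ) ^ k * ((k : ℝ) + 1) * aa n (k + 1) := by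
  have hW : Wf n 0 (k + 1)
      = (2 * ((0 : ℕ) : ℝ) - ((k + 1 : ℕ) : ℝ)) * aa n 0 * aa n (k + 1) := by
    simp [Wf]
  have : Rf n 0 k = (-1 : ℝ) ^ (0 + k + 1) * Wf n 0 (0 + k + 1) := rfl
  rw [this]
  have h0 : 0 + k + 1 = k + 1 := by omega
  rw [h0, hW, aa_zero, pow_succ]
  push_cast
  ring

lemma Rf_right_top (n i : ℕ) : Rf n i (n + 1) = 0 := by
  have : Wf n i (i + (n + 1) + 1) = 0 := by
    refine Finset.sum_eq_zero (fun r hr => ?_)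
    have hrm : r ≤ i := by have := Finset.mem_range.mp hr; omega
    have : n + 1 < (i + (n + 1) + 1) - r := by omega
    rw [aa_big n _ this]
    ring
  rw [Rf, this, mul_zero]

lemma Rf_rown (n k : ℕ) :
    Rf n n k = (-1 : ℝ) ^ (n + k) * ((n : ℝ) + 1 - (k : ℝ)) * aa n k := by
  have hsplit : Wf n (n + k + 1) (n + k + 1)
      = Wf n n (n + k + 1) + ∑ r ∈ Ico (n + 1) (n + k + 2),
          (2 * (r : ℝ) - ((n + k + 1 : ℕ) : ℝ)) * aa n r * aa n ((n + k + 1) - r) := by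
    rw [Wf, Wf, ← Finset.sum_range_add_sum_Ico _ (by omega : n + 1 ≤ n + k + 2)]
  have hIco : ∑ r ∈ Ico (n + 1) (n + k + 2),
      (2 * (r : ℝ) - ((n + k + 1 : ℕ) : ℝ)) * aa n r * aa n ((n + k + 1) - r)
      = (2 * ((n + 1 : ℕ) : ℝ) - ((n + k + 1 : ℕ) : ℝ)) * aa n (n + 1) * aa n k := by
    rw [Finset.sum_eq_single_of_mem (n + 1) (by rw [Finset.mem_Ico]; omega)]
    · have h1 : (n + k + 1) - (n + 1) = k := by omega
      rw [h1]
    · intro r hr hne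
      have hrIco := Finset.mem_Ico.mp hr
      have : n + 1 < r := by omega
      rw [aa_big n r this]
      ring
  rw [Wf_full, hIco, aa_top] at hsplit
  have hWn : Wf n n (n + k + 1) = -(((n : ℝ) + 1 - (k : ℝ)) * aa n k) := by
    push_cast at hsplit
    linarith
  rw [Rf, hWn, pow_succ]
  ring


/-- Identity I1. -/
lemma idI1 (n l : ℕ) (hl1 : 1 ≤ l) (hln : l ≤ n) :
    ∑ k ∈ range (n + 1), (-1 : ℝ) ^ k * aa n (k + 1) * muf n (k + l) = muf n (l - 1) := by
  have M := master (n + 1) (l - 1) (n - l) (by omega)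
  rw [Finset.sum_range_succ'] at M
  have e : ∀ k ∈ range (n + 1),
      (-1 : ℝ) ^ (k + 1) * (((n + 1).choose (k + 1) : ℕ) : ℝ) ^ 2
        * (((k + 1) + (l - 1)).factorial : ℝ) * ((((n + 1) - (k + 1)) + (n - l)).factorial : ℝ)
      = -((-1 : ℝ) ^ k * aa n (k + 1) * muf n (k + l)) := by
    intro k hk
    have hkn : k ≤ n := by have := Finset.mem_range.mp hk; omega
    rw [show (k + 1) + (l - 1) = k + l from by omega,
      show ((n + 1) - (k + 1)) + (n - l) = 2 * n - (k + l) from by omega, aa, muf]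
    ring
  rw [Finset.sum_congr rfl e, Finset.sum_neg_distrib] at M
  have hF0 : (-1 : ℝ) ^ 0 * (((n + 1).choose 0 : ℕ) : ℝ) ^ 2
      * ((0 + (l - 1)).factorial : ℝ) * ((((n + 1) - 0) + (n - l)).factorial : ℝ)
      = muf n (l - 1) := by
    rw [show ((n + 1) - 0) + (n - l) = 2 * n - (l - 1) from by omega, muf]
    simp
    ring
  rw [hF0] at M
  linarith

/-- Identity I2. -/
lemma idI2 (n l : ℕ) (hl1 : 1 ≤ l) (hln : l ≤ n) :
    ∑ k ∈ range (n + 1), (-1 : ℝ) ^ k * ((k : ℝ) + 1) * aa n (k + 1) * muf n (k + l) = 0 := by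
  have MA := master (n + 1) l (n - l) (by omega)
  rw [Finset.sum_range_succ'] at MA
  have eA : ∀ k ∈ range (n + 1),
      (-1 : ℝ) ^ (k + 1) * (((n + 1).choose (k + 1) : ℕ) : ℝ) ^ 2
        * (((k + 1) + l).factorial : ℝ) * ((((n + 1) - (k + 1)) + (n - l)).factorial : ℝ)
      = -((-1 : ℝ) ^ k * aa n (k + 1)
          * (((2 * n - (k + l)).factorial : ℝ) * ((k + l + 1).factorial : ℝ))) := by
    intro k hk
    have hkn : k ≤ n := by have := Finset.mem_range.mp hk; omega
    rw [show (k + 1) + l = k + l + 1 from by omega,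
      show ((n + 1) - (k + 1)) + (n - l) = 2 * n - (k + l) from by omega, aa]
    ring
  rw [Finset.sum_congr rfl eA, Finset.sum_neg_distrib] at MA
  have hFA0 : (-1 : ℝ) ^ 0 * (((n + 1).choose 0 : ℕ) : ℝ) ^ 2
      * ((0 + l).factorial : ℝ) * ((((n + 1) - 0) + (n - l)).factorial : ℝ)
      = (l.factorial : ℝ) * (((2 * n + 1) - l).factorial : ℝ) := by
    rw [show ((n + 1) - 0) + (n - l) = (2 * n + 1) - l from by omega]
    simp
  rw [hFA0] at MA
  have hS1 := idI1 n l hl1 hln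
  have key : ∀ k : ℕ, (-1 : ℝ) ^ k * ((k : ℝ) + 1) * aa n (k + 1) * muf n (k + l)
      = (-1 : ℝ) ^ k * aa n (k + 1)
          * (((2 * n - (k + l)).factorial : ℝ) * ((k + l + 1).factorial : ℝ))
        - (l : ℝ) * ((-1 : ℝ) ^ k * aa n (k + 1) * muf n (k + l)) := by
    intro k
    have hfs : ((k + l + 1).factorial : ℝ) = ((k : ℝ) + (l : ℝ) + 1) * ((k + l).factorial : ℝ) := by
      rw [Nat.factorial_succ]
      push_cast
      ring
    rw [muf, hfs]
    ring
  rw [Finset.sum_congr rfl (fun k _ => key k), Finset.sum_sub_distrib, ← Finset.mul_sum, hS1]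
  have hmm : muf n (l - 1) = (((2 * n + 1) - l).factorial : ℝ) * (((l - 1)).factorial : ℝ) := by
    rw [muf, show 2 * n - (l - 1) = (2 * n + 1) - l from by omega]
  have hlf : (l : ℝ) * (((l - 1)).factorial : ℝ) = (l.factorial : ℝ) := by
    rw [← Nat.cast_mul, Nat.mul_factorial_pred (by omega)]
  rw [hmm]
  have : ∑ k ∈ range (n + 1), (-1 : ℝ) ^ k * aa n (k + 1)
      * (((2 * n - (k + l)).factorial : ℝ) * ((k + l + 1).factorial : ℝ))
      = (l.factorial : ℝ) * (((2 * n + 1) - l).factorial : ℝ) := by linarith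
  rw [this]
  nlinarith [hlf]

/-- Row 0 of `P`. -/
lemma row0 (n l : ℕ) (hln : l ≤ n) :
    ∑ k ∈ range (n + 1), (-1 : ℝ) ^ k * ((k : ℝ) + 1) * aa n (k + 1) * muf n (k + l)
      = if l = 0 then (((2 * n + 1).factorial : ℕ) : ℝ) else 0 := by
  rcases Nat.eq_zero_or_pos l with hl | hl
  · subst hl
    rw [if_pos rfl]
    have M := master (n + 1) 0 n (by omega)
    rw [Finset.sum_range_succ'] at M
    have e : ∀ k ∈ range (n + 1),
        (-1 : ℝ) ^ (k + 1) * (((n + 1).choose (k + 1) : ℕ) : ℝ) ^ 2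
          * (((k + 1) + 0).factorial : ℝ) * ((((n + 1) - (k + 1)) + n).factorial : ℝ)
        = -((-1 : ℝ) ^ k * ((k : ℝ) + 1) * aa n (k + 1) * muf n (k + 0)) := by
      intro k hk
      have hkn : k ≤ n := by have := Finset.mem_range.mp hk; omega
      rw [show ((n + 1) - (k + 1)) + n = 2 * n - (k + 0) from by omega,
        show (k + 1) + 0 = k + 1 from by omega, aa, muf, Nat.factorial_succ]
      push_cast
      ring
    rw [Finset.sum_congr rfl e, Finset.sum_neg_distrib] at M
    have hF0 : (-1 : ℝ) ^ 0 * (((n + 1).choose 0 : ℕ) : ℝ) ^ 2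
        * ((0 + 0).factorial : ℝ) * ((((n + 1) - 0) + n).factorial : ℝ)
        = (((2 * n + 1).factorial : ℕ) : ℝ) := by
      rw [show ((n + 1) - 0) + n = 2 * n + 1 from by omega]
      simp
    rw [hF0] at M
    linarith
  · rw [if_neg (by omega)]
    exact idI2 n l hl hln


/-- Row n diagonal value. -/
lemma rown_diag (n : ℕ) :
    ∑ k ∈ range (n + 1), (-1 : ℝ) ^ (n + k) * ((n : ℝ) + 1 - (k : ℝ)) * aa n k * muf n (k + n)
      = (((2 * n + 1).factorial : ℕ) : ℝ) := by
  have M := master (n + 1) n 0 (by omega)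
  rw [Finset.sum_range_succ] at M
  have e : ∀ k ∈ range (n + 1),
      (-1 : ℝ) ^ k * (((n + 1).choose k : ℕ) : ℝ) ^ 2
        * ((k + n).factorial : ℝ) * ((((n + 1) - k) + 0).factorial : ℝ)
      = (-1 : ℝ) ^ n * ((-1 : ℝ) ^ (n + k) * ((n : ℝ) + 1 - (k : ℝ)) * aa n k * muf n (k + n)) := by
    intro k hk
    have hkn : k ≤ n := by have := Finset.mem_range.mp hk; omega
    have hfs : ((((n + 1) - k) + 0).factorial : ℝ)
        = ((n : ℝ) + 1 - (k : ℝ)) * (((n - k)).factorial : ℝ) := by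
      rw [show ((n + 1) - k) + 0 = (n - k) + 1 from by omega, Nat.factorial_succ,
        Nat.cast_mul, Nat.cast_add, Nat.cast_one, Nat.cast_sub hkn]
      ring
    rw [hfs, aa, muf, show 2 * n - (k + n) = n - k from by omega, pow_add]
    rcases Nat.even_or_odd n with hp | hp
    · rw [hp.neg_one_pow]; ring
    · rw [hp.neg_one_pow]; ring
  rw [Finset.sum_congr rfl e, ← Finset.mul_sum] at M
  have hT : (-1 : ℝ) ^ (n + 1) * (((n + 1).choose (n + 1) : ℕ) : ℝ) ^ 2
      * (((n + 1) + n).factorial : ℝ) * ((((n + 1) - (n + 1)) + 0).factorial : ℝ)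
      = (-1 : ℝ) ^ n * (-(((2 * n + 1).factorial : ℕ) : ℝ)) := by
    rw [show (n + 1) + n = 2 * n + 1 from by omega,
      show ((n + 1) - (n + 1)) + 0 = 0 from by omega, pow_succ]
    simp
  rw [hT] at M
  rcases Nat.even_or_odd n with hp | hp
  · rw [hp.neg_one_pow] at M; linarith
  · rw [hp.neg_one_pow] at M; linarith

/-- Row n off-diagonal vanishing. -/
lemma rown_off (n l : ℕ) (hl : l < n) :
    ∑ k ∈ range (n + 1), (-1 : ℝ) ^ (n + k) * ((n : ℝ) + 1 - (k : ℝ)) * aa n k * muf n (k + l)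
      = 0 := by
  have MA := master (n + 1) l (n - l) (by omega)
  have MB := master (n + 1) l (n - 1 - l) (by omega)
  rw [Finset.sum_range_succ] at MA MB
  have e : ∀ k ∈ range (n + 1),
      (-1 : ℝ) ^ n * ((-1 : ℝ) ^ (n + k) * ((n : ℝ) + 1 - (k : ℝ)) * aa n k * muf n (k + l))
      = ((-1 : ℝ) ^ k * (((n + 1).choose k : ℕ) : ℝ) ^ 2
          * ((k + l).factorial : ℝ) * ((((n + 1) - k) + (n - l)).factorial : ℝ))
        - ((n - l : ℕ) : ℝ) * ((-1 : ℝ) ^ k * (((n + 1).choose k : ℕ) : ℝ) ^ 2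
          * ((k + l).factorial : ℝ) * ((((n + 1) - k) + (n - 1 - l)).factorial : ℝ)) := by
    intro k hk
    have hkn : k ≤ n := by have := Finset.mem_range.mp hk; omega
    have hfs : ((((n + 1) - k) + (n - l)).factorial : ℝ)
        = (((n : ℝ) + 1 - (k : ℝ)) + ((n - l : ℕ) : ℝ))
            * ((((n + 1) - k) + (n - 1 - l)).factorial : ℝ) := by
      rw [show ((n + 1) - k) + (n - l) = (((n + 1) - k) + (n - 1 - l)) + 1 from by omega,
        Nat.factorial_succ, Nat.cast_mul]
      congr 1
      push_cast [Nat.cast_sub hkn, Nat.cast_sub (show l ≤ n from by omega),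
        Nat.cast_sub (show k ≤ n + 1 from by omega),
        Nat.cast_sub (show l ≤ n - 1 from by omega),
        Nat.cast_sub (show (1:ℕ) ≤ n from by omega)]
      ring
    rw [hfs, aa, muf, show 2 * n - (k + l) = ((n + 1) - k) + (n - 1 - l) from by omega, pow_add]
    rcases Nat.even_or_odd n with hp | hp
    · rw [hp.neg_one_pow]; ring
    · rw [hp.neg_one_pow]; ring
  have hsum : (-1 : ℝ) ^ n * ∑ k ∈ range (n + 1),
      (-1 : ℝ) ^ (n + k) * ((n : ℝ) + 1 - (k : ℝ)) * aa n k * muf n (k + l)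
      = (∑ k ∈ range (n + 1), (-1 : ℝ) ^ k * (((n + 1).choose k : ℕ) : ℝ) ^ 2
          * ((k + l).factorial : ℝ) * ((((n + 1) - k) + (n - l)).factorial : ℝ))
        - ((n - l : ℕ) : ℝ) * ∑ k ∈ range (n + 1), (-1 : ℝ) ^ k * (((n + 1).choose k : ℕ) : ℝ) ^ 2
          * ((k + l).factorial : ℝ) * ((((n + 1) - k) + (n - 1 - l)).factorial : ℝ) := by
    rw [Finset.mul_sum, Finset.sum_congr rfl e, Finset.sum_sub_distrib, ← Finset.mul_sum]
  have hTA : (-1 : ℝ) ^ (n + 1) * (((n + 1).choose (n + 1) : ℕ) : ℝ) ^ 2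
      * (((n + 1) + l).factorial : ℝ) * ((((n + 1) - (n + 1)) + (n - l)).factorial : ℝ)
      = (-1 : ℝ) ^ (n + 1) * ((((n + 1) + l).factorial : ℝ) * (((n - l)).factorial : ℝ)) := by
    rw [show ((n + 1) - (n + 1)) + (n - l) = n - l from by omega, Nat.choose_self]
    push_cast
    ring
  have hTB : (-1 : ℝ) ^ (n + 1) * (((n + 1).choose (n + 1) : ℕ) : ℝ) ^ 2
      * (((n + 1) + l).factorial : ℝ) * ((((n + 1) - (n + 1)) + (n - 1 - l)).factorial : ℝ)
      = (-1 : ℝ) ^ (n + 1) * ((((n + 1) + l).factorial : ℝ) * (((n - 1 - l)).factorial : ℝ)) := by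
    rw [show ((n + 1) - (n + 1)) + (n - 1 - l) = n - 1 - l from by omega, Nat.choose_self]
    push_cast
    ring
  rw [hTA] at MA
  rw [hTB] at MB
  have hfac : ((n - l : ℕ) : ℝ) * ((n - 1 - l).factorial : ℝ) = ((n - l).factorial : ℝ) := by
    rw [← Nat.cast_mul, show n - 1 - l = (n - l) - 1 from by omega,
      Nat.mul_factorial_pred (by omega)]
  have hz : (-1 : ℝ) ^ n * ∑ k ∈ range (n + 1),
      (-1 : ℝ) ^ (n + k) * ((n : ℝ) + 1 - (k : ℝ)) * aa n k * muf n (k + l) = 0 := by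
    rw [hsum]
    rw [pow_succ] at MA MB
    linear_combination MA - ((n - l : ℕ) : ℝ) * MB
      - ((-1 : ℝ) ^ n * (((n + 1) + l).factorial : ℝ)) * hfac
  rcases mul_eq_zero.mp hz with h | h
  · exact absurd h (pow_ne_zero n (by norm_num))
  · exact h


lemma step (n i l : ℕ) (hl : l + 1 ≤ n) : Pf n (i + 1) (l + 1) = Pf n i l := by
  have e : ∀ k ∈ range (n + 1), Rf n (i + 1) k * muf n (k + (l + 1))
      = Rf n i (k + 1) * muf n ((k + 1) + l)
        + ((-1 : ℝ) ^ i * aa n (i + 1)) *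
            (((i : ℝ) + 1) * ((-1 : ℝ) ^ k * aa n (k + 1) * muf n (k + (l + 1)))
              - ((-1 : ℝ) ^ k * ((k : ℝ) + 1) * aa n (k + 1) * muf n (k + (l + 1)))) := by
    intro k _
    rw [Rf_disp, show (k + 1) + l = k + (l + 1) from by omega, pow_add]
    ring
  rw [Pf, Finset.sum_congr rfl e, Finset.sum_add_distrib]
  have hsplit2 : ∑ k ∈ range (n + 1), ((-1 : ℝ) ^ i * aa n (i + 1)) *
        (((i : ℝ) + 1) * ((-1 : ℝ) ^ k * aa n (k + 1) * muf n (k + (l + 1)))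
          - ((-1 : ℝ) ^ k * ((k : ℝ) + 1) * aa n (k + 1) * muf n (k + (l + 1))))
      = ((-1 : ℝ) ^ i * aa n (i + 1)) * (((i : ℝ) + 1) * muf n l - 0) := by
    rw [← Finset.mul_sum, Finset.sum_sub_distrib, ← Finset.mul_sum,
      idI1 n (l + 1) (by omega) (by omega), idI2 n (l + 1) (by omega) (by omega),
      show (l + 1) - 1 = l from by omega]
  have h1 := Finset.sum_range_succ' (fun k => Rf n i k * muf n (k + l)) (n + 1)
  have h2 := Finset.sum_range_succ (fun k => Rf n i k * muf n (k + l)) (n + 1)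
  have h3 : Rf n i (n + 1) * muf n ((n + 1) + l) = 0 := by rw [Rf_right_top]; ring
  have hsum1 : ∑ k ∈ range (n + 1), Rf n i (k + 1) * muf n ((k + 1) + l)
      = Pf n i l - Rf n i 0 * muf n (0 + l) := by
    rw [Pf]
    linarith [h1, h2, h3]
  rw [hsplit2, hsum1, Rf_left, show (0 : ℕ) + l = l from by omega]
  ring

lemma climb (n : ℕ) : ∀ t i l, i + t ≤ n → l + t ≤ n → Pf n (i + t) (l + t) = Pf n i l := by
  intro t
  induction t with
  | zero => intro i l _ _; rfl
  | succ t ih =>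
    intro i l hi hl
    rw [show i + (t + 1) = (i + t) + 1 from by omega,
      show l + (t + 1) = (l + t) + 1 from by omega,
      step n (i + t) (l + t) (by omega)]
    exact ih i l (by omega) (by omega)

lemma Pf_row0 (n l : ℕ) (hl : l ≤ n) :
    Pf n 0 l = if l = 0 then (((2 * n + 1).factorial : ℕ) : ℝ) else 0 := by
  rw [Pf, Finset.sum_congr rfl (fun k _ => by rw [Rf_row0] :
    ∀ k ∈ range (n + 1), Rf n 0 k * muf n (k + l)
      = (-1 : ℝ) ^ k * ((k : ℝ) + 1) * aa n (k + 1) * muf n (k + l))]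
  exact row0 n l hl

lemma Pf_rown (n l : ℕ) (hl : l ≤ n) :
    Pf n n l = if l = n then (((2 * n + 1).factorial : ℕ) : ℝ) else 0 := by
  rw [Pf, Finset.sum_congr rfl (fun k _ => by rw [Rf_rown] :
    ∀ k ∈ range (n + 1), Rf n n k * muf n (k + l)
      = (-1 : ℝ) ^ (n + k) * ((n : ℝ) + 1 - (k : ℝ)) * aa n k * muf n (k + l))]
  rcases eq_or_lt_of_le hl with h | h
  · rw [if_pos h, h]
    exact rown_diag n
  · rw [if_neg (by omega)]
    exact rown_off n l h

lemma Pf_main (n i l : ℕ) (hi : i ≤ n) (hl : l ≤ n) :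
    Pf n i l = if i = l then (((2 * n + 1).factorial : ℕ) : ℝ) else 0 := by
  rcases le_total i l with h | h
  · have e := climb n i 0 (l - i) (by omega) (by omega)
    rw [show (0 : ℕ) + i = i from by omega, show (l - i) + i = l from by omega] at e
    rw [e, Pf_row0 n (l - i) (by omega)]
    by_cases hh : i = l
    · rw [if_pos (by omega), if_pos hh]
    · rw [if_neg (by omega), if_neg hh]
  · have e := climb n (n - i) i l (by omega) (by omega)
    rw [show i + (n - i) = n from by omega] at e
    rw [← e, Pf_rown n (l + (n - i)) (by omega)]
    by_cases hh : i = l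
    · rw [if_pos (by omega), if_pos hh]
    · rw [if_neg (by omega), if_neg hh]


/-- Entry identification. -/
lemma entry (n : ℕ) (i k : Fin (n + 1)) :
    (Ttil n * Hmat n - Tmat n * Htil n) i k = Rf n (i : ℕ) (k : ℕ) := by
  have hi : (i : ℕ) ≤ n := Fin.is_le i
  set F : ℕ → ℝ := fun j =>
    ((((i : ℕ) : ℝ) - 2 * (j : ℝ) - ((k : ℕ) : ℝ) - 1)
      * ((-1 : ℝ) ^ (((i : ℕ) : ℤ) - (j : ℤ)) * chooseZ (n + 1) (((i : ℕ) : ℤ) - (j : ℤ)) ^ 2))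
      * ((-1 : ℝ) ^ (j + (k : ℕ) + 1) * (((n + 1).choose (j + (k : ℕ) + 1) : ℕ) : ℝ) ^ 2) with hF
  have e1 : ∀ j : Fin (n + 1),
      Ttil n i j * Hmat n j k - Tmat n i j * Htil n j k = F (j : ℕ) := by
    intro j
    rw [hF, Ttil, Tmat, Hmat, Htil, Hmat]
    simp only []
    push_cast
    ring
  rw [Matrix.sub_apply, Matrix.mul_apply, Matrix.mul_apply, ← Finset.sum_sub_distrib,
    Finset.sum_congr rfl (fun j _ => e1 j), Fin.sum_univ_eq_sum_range F (n + 1)]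
  have hIco : ∑ j ∈ Ico ((i : ℕ) + 1) (n + 1), F j = 0 := by
    refine Finset.sum_eq_zero (fun j hj => ?_)
    have hj' : (i : ℕ) + 1 ≤ j := (Finset.mem_Ico.mp hj).1
    have hneg : ¬ (0 ≤ ((i : ℕ) : ℤ) - (j : ℤ)) := by omega
    rw [hF]
    simp only [chooseZ, if_neg hneg]
    ring
  have hsplit : ∑ j ∈ range (n + 1), F j = ∑ j ∈ range ((i : ℕ) + 1), F j := by
    rw [← Finset.sum_range_add_sum_Ico F (show (i : ℕ) + 1 ≤ n + 1 by omega), hIco, add_zero]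
  rw [hsplit, ← Finset.sum_range_reflect F ((i : ℕ) + 1)]
  have e2 : ∀ r ∈ range ((i : ℕ) + 1),
      F ((i : ℕ) + 1 - 1 - r)
      = (-1 : ℝ) ^ ((i : ℕ) + (k : ℕ) + 1)
          * ((2 * (r : ℝ) - (((i : ℕ) + (k : ℕ) + 1 : ℕ) : ℝ)) * aa n r
              * aa n (((i : ℕ) + (k : ℕ) + 1) - r)) := by
    intro r hr
    have hri : r ≤ (i : ℕ) := by have := Finset.mem_range.mp hr; omega
    have hidx : (i : ℕ) + 1 - 1 - r = (i : ℕ) - r := by omega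
    have hz1 : ((i : ℕ) : ℤ) - (((i : ℕ) - r : ℕ) : ℤ) = (r : ℤ) := by omega
    have hz2 : ((i : ℕ) - r) + (k : ℕ) + 1 = ((i : ℕ) + (k : ℕ) + 1) - r := by omega
    rw [hF]
    simp only [hidx, hz1, hz2]
    rw [zpow_natCast]
    have hch : chooseZ (n + 1) ((r : ℕ) : ℤ) = (((n + 1).choose r : ℕ) : ℝ) := by
      simp [chooseZ]
    rw [hch]
    have hsgn : (-1 : ℝ) ^ r * (-1 : ℝ) ^ (((i : ℕ) + (k : ℕ) + 1) - r)
        = (-1 : ℝ) ^ ((i : ℕ) + (k : ℕ) + 1) := by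
      rw [← pow_add, show r + (((i : ℕ) + (k : ℕ) + 1) - r) = (i : ℕ) + (k : ℕ) + 1 from by omega]
    have hco : (((i : ℕ) : ℝ) - 2 * (((i : ℕ) - r : ℕ) : ℝ) - ((k : ℕ) : ℝ) - 1)
        = 2 * (r : ℝ) - (((i : ℕ) + (k : ℕ) + 1 : ℕ) : ℝ) := by
      rw [Nat.cast_sub hri]
      push_cast
      ring
    rw [hco, aa, aa]
    linear_combination ((2 * (r : ℝ) - (((i : ℕ) + (k : ℕ) + 1 : ℕ) : ℝ))
      * ((((n + 1).choose r : ℕ) : ℝ)) ^ 2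
      * ((((n + 1).choose (((i : ℕ) + (k : ℕ) + 1) - r) : ℕ) : ℝ)) ^ 2) * hsgn
  rw [Finset.sum_congr rfl e2, ← Finset.mul_sum, Rf, Wf]

/-- The left-inverse property. -/
lemma left_inv (n : ℕ) : (Ttil n * Hmat n - Tmat n * Htil n) * bmassH n = 1 := by
  ext i l
  rw [Matrix.mul_apply]
  have e : ∀ j : Fin (n + 1),
      (Ttil n * Hmat n - Tmat n * Htil n) i j * bmassH n j l
      = Rf n (i : ℕ) (j : ℕ) * muf n ((j : ℕ) + (l : ℕ)) / (((2 * n + 1).factorial : ℕ) : ℝ) := by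
    intro j
    rw [entry n i j, bmassH]
    rw [muf, Nat.sub_sub]
    ring
  rw [Finset.sum_congr rfl (fun j _ => e j),
    Fin.sum_univ_eq_sum_range
      (fun j => Rf n (i : ℕ) j * muf n (j + (l : ℕ)) / (((2 * n + 1).factorial : ℕ) : ℝ)) (n + 1),
    ← Finset.sum_div]
  have : ∑ j ∈ range (n + 1), Rf n (i : ℕ) j * muf n (j + (l : ℕ)) = Pf n (i : ℕ) (l : ℕ) := rfl
  rw [this, Pf_main n (i : ℕ) (l : ℕ) (Fin.is_le i) (Fin.is_le l), Matrix.one_apply]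
  by_cases hh : i = l
  · rw [if_pos (by rw [hh]), if_pos hh, div_self (by positivity)]
  · rw [if_neg (fun hc => hh (Fin.ext hc)), if_neg hh, zero_div]


end BHI

/-- `(M̃^n)⁻¹ = T̃^n H^n − T^n H̃^n`. -/
theorem bernstein_hankel_inverse_factorization (n : ℕ) :
    (bmassH n)⁻¹ = Ttil n * Hmat n - Tmat n * Htil n :=
  Matrix.inv_eq_left_inv (BHI.left_inv n)
end
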